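/- arXiv:math/0303334 — 2 statements merged into one kernel-verified Lean document; each statement's English description precedes it below -/
import Mathlib

section
/- Let (R,m,K) be a complete Noetherian local ring of prime characteristic p and let M be an Artinian R-module. Let τ_M = {f ∈ M^∨ : f(0*_M) = 0} be the annihilator in the Matlis dual M^∨ of the tight closure of zero in M. Then for every ideal I of R one has I* · τ_M = I · τ_M (as submodules of M^∨), where I* is the tight closure of I. -/
open scoped TensorProduct Pointwise

universe u v w

section TightClosureDefs

variable (R : Type u) [CommRing R] (p : ℕ)

/-- `R^o`: the complement of the union of the minimal primes of `R`. -/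
def Ro : Set R := {c | ∀ P ∈ minimalPrimes R, c ∉ P}

/-- The Frobenius power `I^{[q]}` of an ideal: the ideal generated by the `q`-th
powers of the elements of `I`. -/
def frobeniusPower (I : Ideal R) (q : ℕ) : Ideal R :=
  Ideal.span ((fun x => x ^ q) '' (I : Set R))

/-- The tight closure `I*` of an ideal `I`: all `x` such that `c x^q ∈ I^{[q]}` for some
`c ∈ R^o` and all `q = p^e ≫ 0`. -/
def idealTC (I : Ideal R) : Set R :=
  {x | ∃ c ∈ Ro R, ∃ e₀ : ℕ, ∀ e ≥ e₀, c * x ^ p ^ e ∈ frobeniusPower R I (p ^ e)}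

/-- `R^e`: `R` viewed as an `R`-algebra via the `e`-th iterated Frobenius `r ↦ r^{p^e}`. -/
def FrobAlg (R : Type u) [CommRing R] (_p _e : ℕ) : Type u := R

instance FrobAlg.instCommRing (e : ℕ) : CommRing (FrobAlg R p e) := inferInstanceAs (CommRing R)

noncomputable instance FrobAlg.instAlgebra (e : ℕ) [ExpChar R p] : Algebra R (FrobAlg R p e) :=
  (iterateFrobenius R p e).toAlgebra

/-- The identity map of `R` into `FrobAlg R p e`. -/
def FrobAlg.mk (e : ℕ) : R → FrobAlg R p e := id

variable [ExpChar R p]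

/-- `N^{[p^e]}_M`: the image of `F^e(N) → F^e(M)`, where `F^e(M) = R^e ⊗_R M` is the
`e`-th Frobenius functor. -/
noncomputable def submoduleFrobPow {M : Type v} [AddCommGroup M] [Module R M]
    (N : Submodule R M) (e : ℕ) : Submodule R (FrobAlg R p e ⊗[R] M) :=
  LinearMap.range (LinearMap.lTensor (FrobAlg R p e) N.subtype)

/-- The tight closure `N*_M` of a submodule `N ⊆ M`: all `m` such that
`c ⊗ m ∈ N^{[q]}_M` for some `c ∈ R^o` and all `q = p^e ≫ 0`. -/
noncomputable def moduleTC {M : Type v} [AddCommGroup M] [Module R M]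
    (N : Submodule R M) : Set M :=
  {m | ∃ c ∈ Ro R, ∃ e₀ : ℕ, ∀ e ≥ e₀,
    (FrobAlg.mk R p e c) ⊗ₜ[R] m ∈ submoduleFrobPow R p N e}

/-- The finitistic tight closure `N*fg_M`: the union of `(N ∩ M')*_{M'}` over all
finitely generated submodules `M' ⊆ M`. -/
noncomputable def finitisticTC {M : Type v} [AddCommGroup M] [Module R M]
    (N : Submodule R M) : Set M :=
  ⋃ (M' : Submodule R M) (_ : M'.FG),
    (M'.subtype '' moduleTC R p (N.comap M'.subtype))

/-- A test element: `c ∈ R^o` such that `c I* ⊆ I` for every ideal `I`. -/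
def IsTestElement (c : R) : Prop :=
  c ∈ Ro R ∧ ∀ I : Ideal R, ∀ x ∈ idealTC R p I, c * x ∈ I

/-- A module test element: `c ∈ R^o` such that for every finitely generated module `M`,
every submodule `N ⊆ M`, every `x ∈ N*_M` and every `q = p^e`, `c ⊗ x ∈ N^{[q]}_M`. -/
def IsModuleTestElement (c : R) : Prop :=
  c ∈ Ro R ∧ ∀ (M : Type u) [AddCommGroup M] [Module R M], Module.Finite R M →
    ∀ (N : Submodule R M), ∀ x ∈ moduleTC R p N, ∀ e : ℕ,
      (FrobAlg.mk R p e c) ⊗ₜ[R] x ∈ submoduleFrobPow R p N e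

/-- The annihilator, inside the Matlis-type dual `Hom_R(M, E)`, of a subset `S ⊆ M`. -/
def annihilatorIn {M : Type v} {E : Type w} [AddCommGroup M] [Module R M]
    [AddCommGroup E] [Module R E] (S : Set M) : Submodule R (M →ₗ[R] E) where
  carrier := {f | ∀ x ∈ S, f x = 0}
  add_mem' := by intro f g hf hg x hx; simp [hf x hx, hg x hx]
  zero_mem' := by intro x hx; simp
  smul_mem' := by intro r f hf x hx; simp [hf x hx]

/-- The product `s · T` of a set of ring elements and a submodule: the submodule
generated by all products `a • t` with `a ∈ s`, `t ∈ T`. -/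
def setSMulSubmodule {M : Type v} [AddCommGroup M] [Module R M]
    (s : Set R) (T : Submodule R M) : Submodule R M :=
  Submodule.span R (s • (T : Set M))

/-- `E` is an injective hull of `M` over `R`: `E` is an injective module admitting an
essential embedding of `M`. -/
def IsInjectiveHull (M : Type v) (E : Type w) [AddCommGroup M] [Module R M]
    [AddCommGroup E] [Module R E] : Prop :=
  Module.Injective R E ∧ ∃ ι : M →ₗ[R] E, Function.Injective ι ∧
    ∀ N : Submodule R E, N ≠ ⊥ → N ⊓ LinearMap.range ι ≠ ⊥

/-- The test ideal `τ(R) = ⋂_M Ann_R (0*_M)`, where `M` runs through all finitely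
generated `R`-modules. -/
noncomputable def testIdeal : Ideal R where
  carrier := {c | ∀ (M : Type u) [AddCommGroup M] [Module R M], Module.Finite R M →
    ∀ x ∈ moduleTC R p (⊥ : Submodule R M), c • x = 0}
  add_mem' := by
    intro a b ha hb M _ _ hfin x hx
    rw [add_smul, ha M hfin x hx, hb M hfin x hx, add_zero]
  zero_mem' := by intro M _ _ hfin x hx; rw [zero_smul]
  smul_mem' := by
    intro r a ha M _ _ hfin x hx
    rw [smul_eq_mul, mul_smul, ha M hfin x hx, smul_zero]

/-- An `F`-finite ring: `R` is finitely generated as a module over its subring of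
`p`-th powers, i.e. `R^1` is a finite `R`-module. -/
def IsFFinite : Prop := Module.Finite R (FrobAlg R p 1)

/-- An ideal generated by a system of parameters: generated by `dim R` elements and
with radical the maximal ideal (i.e. primary to the maximal ideal). -/
def IsParameterIdeal [IsLocalRing R] (I : Ideal R) : Prop :=
  ∃ (n : ℕ) (x : Fin n → R), ringKrullDim R = n ∧ I = Ideal.span (Set.range x) ∧
    I.radical = IsLocalRing.maximalIdeal R

/-- The parameter test ideal `τ_par(R) = ⋂_I (I : I*)`, where `I` runs through the
ideals generated by systems of parameters. -/
def parameterTestIdeal [IsLocalRing R] : Ideal R where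
  carrier := {c | ∀ I : Ideal R, IsParameterIdeal R I → ∀ z ∈ idealTC R p I, c * z ∈ I}
  add_mem' := by
    intro a b ha hb I hI z hz
    rw [add_mul]; exact I.add_mem (ha I hI z hz) (hb I hI z hz)
  zero_mem' := by intro I hI z hz; rw [zero_mul]; exact I.zero_mem
  smul_mem' := by
    intro r a ha I hI z hz
    rw [smul_eq_mul, mul_assoc]; exact I.mul_mem_left r (ha I hI z hz)

/-- A parameter test element: an element of `τ_par(R) ∩ R^o`. -/
def IsParameterTestElement [IsLocalRing R] (c : R) : Prop :=
  c ∈ parameterTestIdeal R p ∧ c ∈ Ro R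

end TightClosureDefs

/-- A Cohen–Macaulay local ring: a local ring admitting a system of parameters
(`dim R` elements generating an ideal whose radical is the maximal ideal, here expressed
as the Jacobson radical `(⊥).jacobson`) that is a regular sequence. -/
def IsCohenMacaulayLocalRing (R : Type u) [CommRing R] : Prop :=
  IsLocalRing R ∧ ∃ (n : ℕ) (x : Fin n → R), ringKrullDim R = n ∧
    (Ideal.span (Set.range x)).radical = (⊥ : Ideal R).jacobson ∧
    RingTheory.Sequence.IsRegular R (List.ofFn x)

/-!
The inclusion `I • τ_M ≤ I* · τ_M` is `I ⊆ I*`. For the other one write `Z = 0*_M` and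
`I = (a₁, …, aₙ)`. If `c x^q ∈ I^{[q]}` and `cᵢ ⊗ aᵢm ∈ 0^{[q]}`, then `(∏ cᵢ) c ⊗ xm` is an
`R^e`-combination of the `cᵢ ⊗ aᵢm`, so `x` maps `(Z :_M I)` into `Z`. Hence for `f ∈ τ_M` the
map `x f` kills the kernel of `φ : M → (M/Z)ⁿ, m ↦ (aᵢm mod Z)ᵢ`; injectivity of `E` factors
`x f` through `φ`, i.e. writes it as `∑ aᵢ gᵢ` with every `gᵢ` vanishing on `Z`.
-/

section Smallness

universe w'

open IsLocalRing

theorem Submodule.small_of_small_quotient {R : Type u} [Ring R] {M : Type v} [AddCommGroup M]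
    [Module R M] (S : Submodule R M) [Small.{w'} S] [Small.{w'} (M ⧸ S)] : Small.{w'} M := by
  let σ : M ⧸ S → M := Function.surjInv S.mkQ_surjective
  refine small_of_surjective (f := fun qs : (M ⧸ S) × S => σ qs.1 + qs.2) fun m => ?_
  have hm : m - σ (S.mkQ m) ∈ S := by
    rw [← Submodule.Quotient.mk_eq_zero, Submodule.Quotient.mk_sub, sub_eq_zero]
    exact (Function.surjInv_eq S.mkQ_surjective _).symm
  exact ⟨(S.mkQ m, ⟨_, hm⟩), add_sub_cancel _ _⟩

theorem Module.IsTorsionBySet.smul_top {R : Type u} [CommRing R] {M : Type v} [AddCommGroup M]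
    [Module R M] {I J : Ideal R} (h : Module.IsTorsionBySet R M ↑(J * I)) :
    Module.IsTorsionBySet R (I • ⊤ : Submodule R M) ↑J := by
  rintro ⟨x, hx⟩ ⟨a, ha⟩
  refine Subtype.ext ?_
  change a • x = 0
  refine Submodule.smul_induction_on hx (fun b hb y _ => ?_) fun y z hy hz => ?_
  · rw [smul_smul]; exact @h y ⟨a * b, Ideal.mul_mem_mul ha hb⟩
  · rw [smul_add, hy, hz, add_zero]

variable {R : Type u} [CommRing R] [IsNoetherianRing R] [IsLocalRing R]
  [Small.{w'} (ResidueField R)]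

theorem small_of_isTorsionBySet_pow_maximalIdeal (n : ℕ) (M : Type v) [AddCommGroup M]
    [Module R M] [Module.Finite R M]
    (h : Module.IsTorsionBySet R M ↑(maximalIdeal R ^ n)) : Small.{w'} M := by
  induction n generalizing M with
  | zero =>
    have : Subsingleton M := ⟨fun x y => by
      rw [← one_smul R x, ← one_smul R y, @h x ⟨1, by simp⟩, @h y ⟨1, by simp⟩]⟩
    infer_instance
  | succ n ih =>
    have : Small.{w'} (R ⧸ maximalIdeal R) := ‹Small.{w'} (ResidueField R)›
    have : Small.{w'} (M ⧸ (maximalIdeal R • ⊤ : Submodule R M)) :=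
      Module.Finite.small (R ⧸ maximalIdeal R) _
    have : Small.{w'} (maximalIdeal R • ⊤ : Submodule R M) :=
      ih _ (Module.IsTorsionBySet.smul_top (by rwa [← pow_succ]))
    exact Submodule.small_of_small_quotient (maximalIdeal R • ⊤ : Submodule R M)

theorem small_of_isHausdorff_maximalIdeal [IsHausdorff (maximalIdeal R) R] : Small.{w'} R := by
  let U : ℕ → Submodule R R := fun n => maximalIdeal R ^ n • ⊤
  have : ∀ n, Small.{w'} (R ⧸ U n) := fun n =>
    small_of_isTorsionBySet_pow_maximalIdeal n _ (Module.isTorsionBySet_quotient_ideal_smul R _)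
  refine small_of_injective (f := fun (r : R) (n : ℕ) => (U n).mkQ r) fun r s hrs => ?_
  refine sub_eq_zero.mp (IsHausdorff.haus ‹_› (r - s) fun n => SModEq.zero.mpr ?_)
  rw [← Submodule.Quotient.mk_eq_zero, Submodule.Quotient.mk_sub, sub_eq_zero]
  exact congrFun hrs n

end Smallness

section TightClosure

variable {R : Type u} [CommRing R] {p : ℕ}

variable (R) in
def roSubmonoid : Submonoid R where
  carrier := Ro R
  one_mem' := fun P hP h => hP.1.1.ne_top ((Ideal.eq_top_iff_one P).mpr h)
  mul_mem' := fun h₁ h₂ P hP hm => (hP.1.1.mem_or_mem hm).elim (h₁ P hP) (h₂ P hP)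

theorem subset_idealTC (I : Ideal R) : (I : Set R) ⊆ idealTC R p I := fun x hx =>
  ⟨1, (roSubmonoid R).one_mem, 0, fun e _ => by
    rw [one_mul]; exact Ideal.subset_span ⟨x, hx, rfl⟩⟩

variable [ExpChar R p]

theorem frobeniusPower_eq_map (I : Ideal R) (e : ℕ) :
    frobeniusPower R I (p ^ e) = I.map (iterateFrobenius R p e) := rfl

theorem FrobAlg.smul_eq_mk_mul {e : ℕ} (r : R) (s : FrobAlg R p e) :
    r • s = FrobAlg.mk R p e (r ^ p ^ e) * s :=
  Algebra.smul_def r s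

variable {M : Type v} [AddCommGroup M] [Module R M]

theorem smul_mem_submoduleFrobPow {N : Submodule R M} {e : ℕ} (s : FrobAlg R p e)
    {z : FrobAlg R p e ⊗[R] M} (hz : z ∈ submoduleFrobPow R p N e) :
    s • z ∈ submoduleFrobPow R p N e := by
  obtain ⟨y, rfl⟩ := hz
  exact ⟨s • y, by
    rw [← LinearMap.baseChange_eq_ltensor, map_smul]⟩

variable (p) in
def frobColon (N : Submodule R M) (m : M) (e : ℕ) : Ideal R where
  carrier := {c | FrobAlg.mk R p e c ⊗ₜ[R] m ∈ submoduleFrobPow R p N e}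
  zero_mem' := by
    show (0 : FrobAlg R p e) ⊗ₜ[R] m ∈ submoduleFrobPow R p N e
    rw [TensorProduct.zero_tmul]; exact zero_mem _
  add_mem' {a b} ha hb := by
    show (FrobAlg.mk R p e a + FrobAlg.mk R p e b) ⊗ₜ[R] m ∈ submoduleFrobPow R p N e
    rw [TensorProduct.add_tmul]; exact add_mem ha hb
  smul_mem' r c hc := by
    show (FrobAlg.mk R p e r * FrobAlg.mk R p e c) ⊗ₜ[R] m ∈ submoduleFrobPow R p N e
    rw [← smul_eq_mul, ← TensorProduct.smul_tmul']
    exact smul_mem_submoduleFrobPow _ hc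

theorem mem_frobColon_smul {N : Submodule R M} {m : M} {e : ℕ} {a c : R} :
    c ∈ frobColon p N (a • m) e ↔ a ^ p ^ e * c ∈ frobColon p N m e := by
  show FrobAlg.mk R p e c ⊗ₜ[R] (a • m) ∈ submoduleFrobPow R p N e ↔ _
  rw [TensorProduct.tmul_smul, TensorProduct.smul_tmul', FrobAlg.smul_eq_mk_mul]
  rfl

theorem frobColon_inf_le_add (N : Submodule R M) (m₁ m₂ : M) (e : ℕ) :
    frobColon p N m₁ e ⊓ frobColon p N m₂ e ≤ frobColon p N (m₁ + m₂) e :=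
  fun _ ⟨h₁, h₂⟩ => by
    show FrobAlg.mk R p e _ ⊗ₜ[R] (m₁ + m₂) ∈ submoduleFrobPow R p N e
    rw [TensorProduct.tmul_add]; exact add_mem h₁ h₂

variable (p) in
noncomputable def moduleTCSubmodule (N : Submodule R M) : Submodule R M where
  carrier := moduleTC R p N
  zero_mem' := ⟨1, (roSubmonoid R).one_mem, 0, fun e _ => by
    show FrobAlg.mk R p e 1 ⊗ₜ[R] (0 : M) ∈ submoduleFrobPow R p N e
    rw [TensorProduct.tmul_zero]; exact zero_mem _⟩
  add_mem' := by
    rintro m₁ m₂ ⟨c₁, hc₁, e₁, h₁⟩ ⟨c₂, hc₂, e₂, h₂⟩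
    refine ⟨c₁ * c₂, (roSubmonoid R).mul_mem hc₁ hc₂, max e₁ e₂, fun e he =>
      frobColon_inf_le_add N m₁ m₂ e ⟨?_, ?_⟩⟩
    · exact Ideal.mul_mem_right _ _ (h₁ e (le_of_max_le_left he))
    · exact Ideal.mul_mem_left _ _ (h₂ e (le_of_max_le_right he))
  smul_mem' := by
    rintro a m ⟨c, hc, e₀, h⟩
    exact ⟨c, hc, e₀, fun e he => mem_frobColon_smul.mpr (Ideal.mul_mem_left _ _ (h e he))⟩

theorem smul_mem_moduleTC_of_mem_idealTC {I : Ideal R} (hI : I.FG) {x : R}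
    (hx : x ∈ idealTC R p I) {N : Submodule R M} {m : M}
    (hm : ∀ y ∈ I, y • m ∈ moduleTC R p N) : x • m ∈ moduleTC R p N := by
  obtain ⟨n, a, rfl⟩ := Submodule.fg_iff_exists_fin_generating_family.mp hI
  obtain ⟨c, hc, e₀, hcx⟩ := hx
  choose c' hc' e' he' using fun i => hm (a i) (Ideal.subset_span ⟨i, rfl⟩)
  refine ⟨(∏ i, c' i) * c, (roSubmonoid R).mul_mem (prod_mem fun i _ => hc' i) hc,
    max e₀ (Finset.univ.sup e'), fun e he => mem_frobColon_smul.mpr ?_⟩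
  -- `∏ c'` multiplies each generator `a i ^ p ^ e` of `I^{[p^e]}`, hence `c x^{p^e}`, into the colon
  have hgen : ∀ i, a i ^ p ^ e * ∏ j, c' j ∈ frobColon p N m e := fun i => by
    rw [← Finset.mul_prod_erase _ _ (Finset.mem_univ i), ← mul_assoc]
    exact Ideal.mul_mem_right _ _ (mem_frobColon_smul.mp
      (he' i e ((Finset.le_sup (Finset.mem_univ i)).trans (le_of_max_le_right he))))
  have hI : frobeniusPower R (Ideal.span (Set.range a)) (p ^ e) ≤
      (frobColon p N m e).colon {∏ j, c' j} := by
    rw [frobeniusPower_eq_map, Ideal.map_le_iff_le_comap, Ideal.span_le]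
    rintro _ ⟨i, rfl⟩
    exact Submodule.mem_colon_singleton.mpr (hgen i)
  have := Submodule.mem_colon_singleton.mp (hI (hcx e (le_of_max_le_left he)))
  rw [smul_eq_mul] at this
  convert this using 1
  ring

end TightClosure

section InjectiveDual

variable {R : Type u} [CommRing R] {E : Type w} [AddCommGroup E] [Module R E]
  [Small.{w} R] [Module.Injective R E]

theorem Module.Injective.exists_comp_eq_of_ker_le {M : Type v} {N : Type*} [AddCommGroup M]
    [Module R M] [AddCommGroup N] [Module R N] (φ : M →ₗ[R] N) (f : M →ₗ[R] E)
    (h : LinearMap.ker φ ≤ LinearMap.ker f) : ∃ g : N →ₗ[R] E, g ∘ₗ φ = f := by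
  obtain ⟨g, hg⟩ := Module.Injective.extension_property R E _ _ ((LinearMap.ker φ).liftQ φ le_rfl)
    (LinearMap.ker_eq_bot.mp (Submodule.ker_liftQ_eq_bot _ _ _ le_rfl))
    ((LinearMap.ker φ).liftQ f h)
  refine ⟨g, LinearMap.ext fun m => ?_⟩
  simpa using LinearMap.congr_fun hg (Submodule.Quotient.mk m)

theorem mem_smul_annihilatorIn_of_vanish_on_colon {M : Type v} [AddCommGroup M] [Module R M]
    {I : Ideal R} (hI : I.FG) (Z : Submodule R M) (f : M →ₗ[R] E)
    (hf : ∀ m, (∀ y ∈ I, y • m ∈ Z) → f m = 0) :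
    f ∈ I • annihilatorIn R (E := E) (Z : Set M) := by
  obtain ⟨n, a, rfl⟩ := Submodule.fg_iff_exists_fin_generating_family.mp hI
  let ι : Fin n → M →ₗ[R] (Fin n → M ⧸ Z) := fun i => LinearMap.single R _ i ∘ₗ Z.mkQ
  have hker : LinearMap.ker (∑ i, a i • ι i) ≤ LinearMap.ker f := fun m hm => by
    have hcoord : ∀ i, a i • m ∈ Z := fun i => by
      have := congrFun (LinearMap.mem_ker.mp hm) i
      simp only [ι, LinearMap.coe_sum, LinearMap.coe_smul, LinearMap.coe_comp,
        LinearMap.coe_single, Finset.sum_apply, Pi.smul_apply, Function.comp_apply,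
        Submodule.mkQ_apply, Pi.single_apply, smul_ite, smul_zero, Finset.sum_ite_eq,
        Finset.mem_univ, if_true, Pi.zero_apply] at this
      rwa [← Submodule.Quotient.mk_smul, Submodule.Quotient.mk_eq_zero] at this
    have hspan : Ideal.span (Set.range a) ≤ Z.colon {m} := Ideal.span_le.mpr <| by
      rintro _ ⟨i, rfl⟩
      exact Submodule.mem_colon_singleton.mpr (hcoord i)
    exact hf m fun y hy => Submodule.mem_colon_singleton.mp (hspan hy)
  obtain ⟨g, rfl⟩ := Module.Injective.exists_comp_eq_of_ker_le _ f hker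
  have hsum : g ∘ₗ ∑ i, a i • ι i = ∑ i, a i • (g ∘ₗ ι i) := by
    ext m; simp
  rw [hsum]
  refine Submodule.sum_mem _ fun i _ => ?_
  refine Submodule.smul_mem_smul (Ideal.subset_span ⟨i, rfl⟩) fun z hz => ?_
  simp [ι, (Submodule.Quotient.mk_eq_zero Z).mpr hz]

end InjectiveDual

theorem tight_closure_strong_test_module_general
    (R : Type u) [CommRing R] [IsNoetherianRing R] [IsLocalRing R]
    (p : ℕ) [Fact p.Prime] [CharP R p]
    [IsAdicComplete (IsLocalRing.maximalIdeal R) R]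
    (M : Type v) [AddCommGroup M] [Module R M]
    (E : Type w) [AddCommGroup E] [Module R E]
    (hE : IsInjectiveHull R (IsLocalRing.ResidueField R) E)
    (I : Ideal R) :
    setSMulSubmodule R (idealTC R p I)
        (annihilatorIn R (E := E) (moduleTC R p (⊥ : Submodule R M))) =
      I • annihilatorIn R (E := E) (moduleTC R p (⊥ : Submodule R M)) := by
  obtain ⟨_, ι, hι, -⟩ := hE
  -- `Module.Injective R E` only tests modules in `E`'s universe; extending along maps between
  -- modules of other universes needs `R` to be `w`-small.
  have : Small.{w} (IsLocalRing.ResidueField R) := small_of_injective hι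
  have : Small.{w} R := small_of_isHausdorff_maximalIdeal
  have hI : I.FG := IsNoetherian.noetherian I
  refine le_antisymm (Submodule.span_le.mpr ?_) (Submodule.smul_le.mpr fun r hr f hf => ?_)
  · rintro _ ⟨x, hx, f, hf, rfl⟩
    refine mem_smul_annihilatorIn_of_vanish_on_colon hI (moduleTCSubmodule p ⊥) (x • f)
      fun m hm => ?_
    rw [LinearMap.smul_apply, ← map_smul]
    exact hf _ (smul_mem_moduleTC_of_mem_idealTC hI hx hm)
  · exact Submodule.subset_span (Set.smul_mem_smul (subset_idealTC I hr) hf)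

/-- For a complete Noetherian local ring `(R,m,K)` of prime
characteristic `p` and an Artinian `R`-module `M`, the test module
`τ_M = Ann_{M^∨}(0*_M) ⊆ M^∨ = Hom_R(M, E_R(K))` satisfies `I* · τ_M = I · τ_M`
for every ideal `I` of `R`. -/
theorem tight_closure_strong_test_module
    (R : Type u) [CommRing R] [IsNoetherianRing R] [IsLocalRing R]
    (p : ℕ) [Fact p.Prime] [CharP R p]
    [IsAdicComplete (IsLocalRing.maximalIdeal R) R]
    (M : Type v) [AddCommGroup M] [Module R M] [IsArtinian R M]
    (E : Type w) [AddCommGroup E] [Module R E]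
    (hE : IsInjectiveHull R (IsLocalRing.ResidueField R) E)
    (I : Ideal R) :
    setSMulSubmodule R (idealTC R p I)
        (annihilatorIn R (E := E) (moduleTC R p (⊥ : Submodule R M))) =
      I • annihilatorIn R (E := E) (moduleTC R p (⊥ : Submodule R M)) :=
  tight_closure_strong_test_module_general R p M E hE I
end

section
/- Let K be a field of prime characteristic p. In the polynomial ring K[x,y,z,w], one has (xw)^{p(p−1)+1} ∉ (x^{p²} − w^{p²}, x^{p²} − y^{p²} − z^{p²}, xy, yz, zw). (Indeed, substituting y = z = 0, this reduces to the fact that (xw)^{p²−p+1} ∉ (x^{p²}, w^{p²}) in K[x,w].) -/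
open MvPolynomial

private theorem part2_aux (K : Type*) [Field K] (p : ℕ) [Fact p.Prime] [CharP K p] :
    ((X 0 : MvPolynomial (Fin 2) K) * X 1) ^ (p ^ 2 - p + 1) ∉
      Ideal.span {(X 0 : MvPolynomial (Fin 2) K) ^ p ^ 2, X 1 ^ p ^ 2} := by
  classical
  have hp := (Fact.out : p.Prime).two_le
  have h2 : p + 1 ≤ p ^ 2 := by nlinarith
  have hlt : p ^ 2 - p + 1 < p ^ 2 := by omega
  intro h
  have hset : ({(X 0 : MvPolynomial (Fin 2) K) ^ p ^ 2, X 1 ^ p ^ 2} : Set (MvPolynomial (Fin 2) K))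
      = (fun s => monomial s (1:K)) '' {Finsupp.single 0 (p^2), Finsupp.single 1 (p^2)} := by
    simp [Set.image_insert_eq, X_pow_eq_monomial]
  rw [hset, mem_ideal_span_monomial_image] at h
  have hm : ((X 0 : MvPolynomial (Fin 2) K) * X 1) ^ (p ^ 2 - p + 1)
      = monomial (Finsupp.single 0 (p^2-p+1) + Finsupp.single 1 (p^2-p+1)) (1:K) := by
    rw [X, X, monomial_mul, monomial_pow]
    simp [Finsupp.smul_single]
  rw [hm] at h
  have := h (Finsupp.single 0 (p^2-p+1) + Finsupp.single 1 (p^2-p+1)) (by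
    rw [support_monomial, if_neg one_ne_zero]; simp)
  obtain ⟨si, hsi, hle⟩ := this
  rcases hsi with rfl | rfl
  · have := hle 0; simp at this; omega
  · have := hle 1; simp at this; omega

private theorem part1_aux (K : Type*) [Field K] (p : ℕ) [Fact p.Prime] [CharP K p]
    (h2 : ((X 0 : MvPolynomial (Fin 2) K) * X 1) ^ (p ^ 2 - p + 1) ∉
      Ideal.span {(X 0 : MvPolynomial (Fin 2) K) ^ p ^ 2, X 1 ^ p ^ 2}) :
    ((X 0 : MvPolynomial (Fin 4) K) * X 3) ^ (p * (p - 1) + 1) ∉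
      Ideal.span {(X 0 : MvPolynomial (Fin 4) K) ^ p ^ 2 - X 3 ^ p ^ 2,
        X 0 ^ p ^ 2 - X 1 ^ p ^ 2 - X 2 ^ p ^ 2, X 0 * X 1, X 1 * X 2, X 2 * X 3} := by
  intro h
  have hp := (Fact.out : p.Prime).two_le
  have hz : ((0 : MvPolynomial (Fin 2) K)) ^ p ^ 2 = 0 :=
    zero_pow (pow_ne_zero 2 (by omega : p ≠ 0))
  set φ : MvPolynomial (Fin 4) K →+* MvPolynomial (Fin 2) K :=
    (aeval ![X 0, 0, 0, X 1] : MvPolynomial (Fin 4) K →ₐ[K] MvPolynomial (Fin 2) K).toRingHom with hφ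
  have hmem : φ (((X 0 : MvPolynomial (Fin 4) K) * X 3) ^ (p * (p - 1) + 1)) ∈
      Ideal.span ({(X 0 : MvPolynomial (Fin 2) K) ^ p ^ 2, X 1 ^ p ^ 2} : Set _) := by
    refine Ideal.map_le_of_le_comap ?_ (Ideal.mem_map_of_mem φ h)
    rw [Ideal.span_le]
    rintro f (rfl | rfl | rfl | rfl | rfl) <;>
        simp only [SetLike.mem_coe, Ideal.mem_comap, hφ, AlgHom.toRingHom_eq_coe,
          RingHom.coe_coe, map_sub, map_mul, map_pow, aeval_X, Matrix.cons_val_zero,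
          Matrix.cons_val_one, Matrix.head_cons, Matrix.cons_val_two, Matrix.tail_cons,
          Matrix.cons_val_three]
    · exact Ideal.sub_mem _ (Ideal.subset_span (Set.mem_insert _ _))
        (Ideal.subset_span (Set.mem_insert_of_mem _ rfl))
    · rw [hz, sub_zero, sub_zero]
      exact Ideal.subset_span (Set.mem_insert _ _)
    · rw [mul_zero]; exact Ideal.zero_mem _
    · rw [mul_zero]; exact Ideal.zero_mem _
    · rw [zero_mul]; exact Ideal.zero_mem _
  have heq : φ (((X 0 : MvPolynomial (Fin 4) K) * X 3) ^ (p * (p - 1) + 1)) =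
      ((X 0 : MvPolynomial (Fin 2) K) * X 1) ^ (p ^ 2 - p + 1) := by
    have he : p * (p - 1) + 1 = p ^ 2 - p + 1 := by rw [Nat.mul_sub_one, sq]
    rw [he, hφ]
    simp
  rw [heq] at hmem
  exact h2 hmem

/-- Let `K` be a field of prime characteristic `p`.  In `K[x,y,z,w]`
one has `(xw)^{p(p−1)+1} ∉ (x^{p²} − w^{p²}, x^{p²} − y^{p²} − z^{p²}, xy, yz, zw)`;
indeed, substituting `y = z = 0` this reduces to
`(xw)^{p²−p+1} ∉ (x^{p²}, w^{p²})` in `K[x,w]`.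
Here `x = X 0`, `y = X 1`, `z = X 2`, `w = X 3`. -/
theorem xw_pow_not_mem (K : Type*) [Field K] (p : ℕ) [Fact p.Prime] [CharP K p] :
    ((X 0 : MvPolynomial (Fin 4) K) * X 3) ^ (p * (p - 1) + 1) ∉
      Ideal.span {(X 0 : MvPolynomial (Fin 4) K) ^ p ^ 2 - X 3 ^ p ^ 2,
        X 0 ^ p ^ 2 - X 1 ^ p ^ 2 - X 2 ^ p ^ 2, X 0 * X 1, X 1 * X 2, X 2 * X 3} ∧
    ((X 0 : MvPolynomial (Fin 2) K) * X 1) ^ (p ^ 2 - p + 1) ∉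
      Ideal.span {(X 0 : MvPolynomial (Fin 2) K) ^ p ^ 2, X 1 ^ p ^ 2} :=
  ⟨part1_aux K p (part2_aux K p), part2_aux K p⟩
end
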